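/- Let T>0 and E a separable Banach space. For each λ∈[0,1] let {A^{(λ)}(t)}_{t∈[0,T]} be a family of linear operators on E having an associated evolution system R^{(λ)}, assume {R^{(λ)}}_{λ∈[0,1]} is a continuous family of evolution systems, and assume there is ω>0 such that ‖R^{(λ)}(t,s)‖ ≤ e^{−ω(t−s)} for all 0≤s≤t≤T and λ∈[0,1]. Let F:[0,T]×E×[0,1]→E be continuous, locally Lipschitz in the second variable uniformly with respect to the other variables, of sublinear growth in the second variable uniformly with respect to the others, and satisfy β(F([0,T]×Q×[0,1]))≤kβ(Q) for every bounded Q⊂E, for some k≥0. For t∈[0,T] define Φ_t:E×[0,1]→E by Φ_t(x,λ):=u(t;0,T,x,λ), where u(·;0,T,x,λ) is the unique mild solution of u'(t)=A^{(λ)}(t)u(t)+F(t,u(t),λ), u(0)=x. Then for every bounded Q⊂E and t∈[0,T], the set Φ_t(Q×[0,1]) is bounded and β(Φ_t(Q×[0,1])) ≤ e^{(k−ω)t} β(Q). -/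

import Mathlib

open Filter Topology Set MeasureTheory

noncomputable section

variable {E : Type*} [NormedAddCommGroup E] [NormedSpace ℝ E]

/-- An evolution system `{R(t,s)}_{0 ≤ s ≤ t ≤ T}` on `E`. -/
structure IsEvolutionSystem (T : ℝ) (R : ℝ → ℝ → E →L[ℝ] E) : Prop where
  refl : ∀ t ∈ Icc (0 : ℝ) T, R t t = 1
  comp : ∀ ⦃s r t : ℝ⦄, 0 ≤ s → s ≤ r → r ≤ t → t ≤ T → R t s = (R t r).comp (R r s)
  strong_cont : ∀ x : E, ContinuousOn (fun p : ℝ × ℝ => R p.1 p.2 x)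
    {p : ℝ × ℝ | 0 ≤ p.2 ∧ p.2 ≤ p.1 ∧ p.1 ≤ T}

/-- The parameter domain `{(t,s) : 0 ≤ s ≤ t ≤ T}` of an evolution system. -/
def evolDomain (T : ℝ) : Set (ℝ × ℝ) := {p : ℝ × ℝ | 0 ≤ p.2 ∧ p.2 ≤ p.1 ∧ p.1 ≤ T}

/-- A family `{R^{(λ)}}_{λ∈[0,1]}` of evolution systems is continuous: for every `x ∈ E`
and every sequence `λₙ → λ₀` in `[0,1]`, `R^{(λₙ)}(t,s)x → R^{(λ₀)}(t,s)x` uniformly in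
`0 ≤ s ≤ t ≤ T`. -/
def IsContinuousEvolFamily (T : ℝ) (R : ℝ → ℝ → ℝ → E →L[ℝ] E) : Prop :=
  ∀ (x : E) (l : ℕ → ℝ) (l0 : ℝ), (∀ n, l n ∈ Icc (0 : ℝ) 1) → l0 ∈ Icc (0 : ℝ) 1 →
    Tendsto l atTop (𝓝 l0) →
    TendstoUniformlyOn (fun n p => R (l n) p.1 p.2 x) (fun p => R l0 p.1 p.2 x)
      atTop (evolDomain T)

/-- The map `Σ(x,w,λ)(t) = R^{(λ)}(t,0)x + ∫₀ᵗ R^{(λ)}(t,s) w(s) ds`. -/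
def evolMap (R : ℝ → ℝ → E →L[ℝ] E) (x : E) (w : ℝ → E) (t : ℝ) : E :=
  R t 0 x + ∫ s in (0 : ℝ)..t, R t s (w s)

/-- The Hausdorff measure of noncompactness of a set `Q`. -/
def hausdorffMNC (Q : Set E) : ℝ :=
  sInf {r : ℝ | 0 < r ∧ ∃ c : Finset E, Q ⊆ ⋃ y ∈ c, Metric.ball y r}

variable (T : ℝ) in
/-- `u` is a mild solution on `[0,T]` of `u' = A(t)u + g(t,u)`, `u(0) = x`, for the evolution
system `R` associated with `{A(t)}`. -/
def IsMildSolution (R : ℝ → ℝ → E →L[ℝ] E) (g : ℝ → E → E) (x : E) (u : ℝ → E) : Prop :=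
  ContinuousOn u (Icc (0 : ℝ) T) ∧
  ∀ t ∈ Icc (0 : ℝ) T, u t = R t 0 x + ∫ s in (0 : ℝ)..t, R t s (g s (u s))

/-- `F(t,x,λ)` is continuous on `[0,T] × E × [0,1]`. -/
def ParamContinuous (T : ℝ) (F : ℝ → E → ℝ → E) : Prop :=
  ContinuousOn (fun p : ℝ × E × ℝ => F p.1 p.2.1 p.2.2)
    (Icc (0 : ℝ) T ×ˢ (univ : Set E) ×ˢ Icc (0 : ℝ) 1)

/-- `F` is locally Lipschitz in the second variable, uniformly in the other variables. -/
def ParamLocallyLipschitz (T : ℝ) (F : ℝ → E → ℝ → E) : Prop :=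
  ∀ x : E, ∃ r > (0 : ℝ), ∃ Lc > (0 : ℝ), ∀ t ∈ Icc (0 : ℝ) T, ∀ lam ∈ Icc (0 : ℝ) 1,
    ∀ x₁ ∈ Metric.ball x r, ∀ x₂ ∈ Metric.ball x r,
      ‖F t x₁ lam - F t x₂ lam‖ ≤ Lc * ‖x₁ - x₂‖

/-- `F` has sublinear growth in the second variable, uniformly in the other variables. -/
def ParamSublinear (T : ℝ) (F : ℝ → E → ℝ → E) : Prop :=
  ∃ c > (0 : ℝ), ∀ t ∈ Icc (0 : ℝ) T, ∀ lam ∈ Icc (0 : ℝ) 1, ∀ x : E,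
    ‖F t x lam‖ ≤ c * (1 + ‖x‖)

/-- The image `F([0,T] × Q × [0,1])`. -/
def paramImage (T : ℝ) (F : ℝ → E → ℝ → E) (Q : Set E) : Set E :=
  {y : E | ∃ t ∈ Icc (0 : ℝ) T, ∃ x ∈ Q, ∃ lam ∈ Icc (0 : ℝ) 1, y = F t x lam}

/-!
Write `Φ_t` for the set of values at time `t` and fix `τ < τ' = τ + h`. Every mild solution
satisfies `u(τ') = R(τ',τ) u(τ) + ∫_τ^{τ'} R(τ',s) F(s,u(s),λ) ds`. Since the orbits
`(λ,t,s) ↦ R^{(λ)}(t,s) x` are compact, the first terms form a set of measure at most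
`e^{-ωh} β(Φ_τ)`. The integral lies in `h` times the closed convex hull of
`R(τ',s) F([0,T] × U × [0,1])` with `U = ⋃_{σ ∈ [τ,τ']} Φ_σ`, whose measure is at most
`k β(U) ≤ k (β(Φ_τ) + O(h))`. Hence `β(Φ_{τ'}) ≤ (e^{-ωh} + kh) β(Φ_τ) + O(h²)`; iterating this
over `n` steps of length `t / n` and letting `n → ∞` gives the factor `e^{(k-ω)t}`.
Boundedness of the `Φ_t` comes from Grönwall's inequality and the sublinear growth of `F`.
-/

open Pointwise Metric Bornology

set_option linter.unusedSectionVars false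

section HausdorffMNC

lemma hausdorffMNC_nonneg (Q : Set E) : 0 ≤ hausdorffMNC Q :=
  Real.sInf_nonneg fun _ hr => hr.1.le

lemma hausdorffMNC_le_of_forall_finite_cover {Q : Set E} {r : ℝ} (hr : 0 ≤ r)
    (h : ∀ ε > 0, ∃ t : Set E, t.Finite ∧ Q ⊆ ⋃ y ∈ t, ball y (r + ε)) :
    hausdorffMNC Q ≤ r := by
  refine le_of_forall_pos_le_add fun ε hε => csInf_le ⟨0, fun _ hs => hs.1.le⟩ ⟨by positivity, ?_⟩
  obtain ⟨t, ht, hQt⟩ := h ε hε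
  exact ⟨ht.toFinset, by simpa using hQt⟩

lemma exists_finite_cover_of_hausdorffMNC_lt {Q : Set E} (hQ : IsBounded Q) {r : ℝ}
    (h : hausdorffMNC Q < r) : ∃ t : Set E, t.Finite ∧ Q ⊆ ⋃ y ∈ t, ball y r := by
  obtain ⟨ρ, hρ⟩ := hQ.subset_ball (0 : E)
  have hne : {r : ℝ | 0 < r ∧ ∃ c : Finset E, Q ⊆ ⋃ y ∈ c, ball y r}.Nonempty :=
    ⟨max ρ 1, by positivity, {0}, by simpa using hρ.trans (ball_subset_ball (le_max_left ρ 1))⟩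
  obtain ⟨r', ⟨-, c, hc⟩, hr'⟩ := exists_lt_of_csInf_lt hne h
  exact ⟨c, c.finite_toSet, hc.trans (iUnion₂_mono fun y _ => ball_subset_ball hr'.le)⟩

lemma hausdorffMNC_mono {A B : Set E} (hAB : A ⊆ B) (hB : IsBounded B) :
    hausdorffMNC A ≤ hausdorffMNC B := by
  refine hausdorffMNC_le_of_forall_finite_cover (hausdorffMNC_nonneg B) fun ε hε => ?_
  obtain ⟨t, ht, hBt⟩ := exists_finite_cover_of_hausdorffMNC_lt hB (lt_add_of_pos_right _ hε)
  exact ⟨t, ht, hAB.trans hBt⟩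

lemma hausdorffMNC_le_of_subset_add_closedBall {A K : Set E} (hK : TotallyBounded K) {r : ℝ}
    (hr : 0 ≤ r) (hA : A ⊆ K + closedBall 0 r) : hausdorffMNC A ≤ r := by
  refine hausdorffMNC_le_of_forall_finite_cover hr fun ε hε => ?_
  obtain ⟨t, ht, hKt⟩ := Metric.totallyBounded_iff.1 hK ε hε
  refine ⟨t, ht, fun a ha => ?_⟩
  obtain ⟨k, hk, z, hz, rfl⟩ := hA ha
  obtain ⟨y, hy, hky⟩ := mem_iUnion₂.1 (hKt hk)
  rw [mem_ball] at hky
  rw [mem_closedBall_zero_iff] at hz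
  refine mem_iUnion₂.2 ⟨y, hy, ?_⟩
  calc dist (k + z) y ≤ dist k y + ‖z‖ := by
        rw [dist_eq_norm, dist_eq_norm, add_sub_right_comm]; exact norm_add_le _ _
  _ < r + ε := by linarith

lemma hausdorffMNC_closedBall_le (z : E) {r : ℝ} (hr : 0 ≤ r) :
    hausdorffMNC (closedBall z r) ≤ r :=
  hausdorffMNC_le_of_subset_add_closedBall (finite_singleton z).totallyBounded hr fun x hx =>
    ⟨z, rfl, x - z, by rwa [mem_closedBall_zero_iff, ← dist_eq_norm], add_sub_cancel z x⟩

lemma hausdorffMNC_le_add_of_subset_add {A W Z : Set E} (hW : IsBounded W) (hZ : IsBounded Z)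
    (hA : A ⊆ W + Z) : hausdorffMNC A ≤ hausdorffMNC W + hausdorffMNC Z := by
  have := hausdorffMNC_nonneg W
  have := hausdorffMNC_nonneg Z
  refine hausdorffMNC_le_of_forall_finite_cover (by positivity) fun ε hε => ?_
  obtain ⟨s, hs, hWs⟩ := exists_finite_cover_of_hausdorffMNC_lt hW
    (lt_add_of_pos_right (hausdorffMNC W) (half_pos hε))
  obtain ⟨t, ht, hZt⟩ := exists_finite_cover_of_hausdorffMNC_lt hZ
    (lt_add_of_pos_right (hausdorffMNC Z) (half_pos hε))
  refine ⟨s + t, hs.add ht, fun a ha => ?_⟩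
  obtain ⟨w, hw, z, hz, rfl⟩ := hA ha
  obtain ⟨y, hy, hwy⟩ := mem_iUnion₂.1 (hWs hw)
  obtain ⟨y', hy', hzy'⟩ := mem_iUnion₂.1 (hZt hz)
  rw [mem_ball] at hwy hzy'
  refine mem_iUnion₂.2 ⟨y + y', add_mem_add hy hy', ?_⟩
  calc dist (w + z) (y + y') ≤ dist w y + dist z y' := dist_add_add_le _ _ _ _
  _ < _ := by linarith

lemma hausdorffMNC_smul_le {S : Set E} (hS : IsBounded S) {c : ℝ} (hc : 0 < c) :
    hausdorffMNC (c • S) ≤ c * hausdorffMNC S := by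
  have := hausdorffMNC_nonneg S
  refine hausdorffMNC_le_of_forall_finite_cover (by positivity) fun ε hε => ?_
  obtain ⟨t, ht, hSt⟩ := exists_finite_cover_of_hausdorffMNC_lt hS
    (lt_add_of_pos_right (hausdorffMNC S) (div_pos hε hc))
  refine ⟨c • t, ht.smul_set, ?_⟩
  rintro _ ⟨s, hs, rfl⟩
  obtain ⟨y, hy, hsy⟩ := mem_iUnion₂.1 (hSt hs)
  refine mem_iUnion₂.2 ⟨c • y, smul_mem_smul_set hy, ?_⟩
  rw [mem_ball, dist_smul₀, Real.norm_of_nonneg hc.le]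
  calc c * dist s y < c * (hausdorffMNC S + ε / c) := by gcongr; exact hsy
  _ = c * hausdorffMNC S + ε := by field_simp

lemma hausdorffMNC_closure_convexHull_le {D : Set E} (hD : IsBounded D) :
    hausdorffMNC (closure (convexHull ℝ D)) ≤ hausdorffMNC D := by
  refine le_of_forall_gt_imp_ge_of_dense fun r hr => ?_
  obtain ⟨t, ht, hDt⟩ := exists_finite_cover_of_hausdorffMNC_lt hD hr
  have hK : IsCompact (convexHull ℝ t) := ht.isCompact_convexHull ℝ
  have hDK : D ⊆ convexHull ℝ t + closedBall 0 r := fun x hx => by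
    obtain ⟨y, hy, hxy⟩ := mem_iUnion₂.1 (hDt hx)
    refine ⟨y, subset_convexHull ℝ t hy, x - y, ?_, add_sub_cancel y x⟩
    rw [mem_closedBall_zero_iff, ← dist_eq_norm]
    exact (mem_ball.1 hxy).le
  refine hausdorffMNC_le_of_subset_add_closedBall hK.totallyBounded
    ((hausdorffMNC_nonneg D).trans hr.le) (closure_minimal (convexHull_min hDK ?_) ?_)
  · exact (convex_convexHull ℝ t).add (convex_closedBall 0 r)
  · exact isClosed_closedBall.add_left_of_isCompact hK

lemma image2_apply_subset_closedBall {ι E' : Type*} [NormedAddCommGroup E'] [NormedSpace ℝ E']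
    {P : Set ι} {G : ι → E →L[ℝ] E'} {m : ℝ} (hm : ∀ p ∈ P, ‖G p‖ ≤ m) {B : Set E} {ρ : ℝ}
    (hB : B ⊆ closedBall 0 ρ) : image2 (fun p b => G p b) P B ⊆ closedBall 0 (m * ρ) := by
  rintro _ ⟨p, hp, b, hb, rfl⟩
  exact mem_closedBall_zero_iff.2
    ((G p).le_of_opNorm_le_of_le (hm p hp) (mem_closedBall_zero_iff.1 (hB hb)))

lemma hausdorffMNC_image2_apply_le {ι E' : Type*} [NormedAddCommGroup E'] [NormedSpace ℝ E']
    {P : Set ι} {G : ι → E →L[ℝ] E'} {m : ℝ} (hm0 : 0 ≤ m) (hm : ∀ p ∈ P, ‖G p‖ ≤ m)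
    (horbit : ∀ y, TotallyBounded ((fun p => G p y) '' P)) {B : Set E} (hB : IsBounded B) :
    hausdorffMNC (image2 (fun p b => G p b) P B) ≤ m * hausdorffMNC B := by
  have hcover : ∀ r > hausdorffMNC B, hausdorffMNC (image2 (fun p b => G p b) P B) ≤ m * r := by
    intro r hr
    obtain ⟨t, ht, hBt⟩ := exists_finite_cover_of_hausdorffMNC_lt hB hr
    refine hausdorffMNC_le_of_subset_add_closedBall ((totallyBounded_biUnion ht).2 fun y _ =>
      horbit y) (mul_nonneg hm0 ((hausdorffMNC_nonneg B).trans hr.le)) ?_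
    rintro _ ⟨p, hp, b, hb, rfl⟩
    obtain ⟨y, hy, hby⟩ := mem_iUnion₂.1 (hBt hb)
    refine ⟨G p y, mem_iUnion₂.2 ⟨y, hy, p, hp, rfl⟩, G p (b - y), ?_, by simp⟩
    rw [mem_closedBall_zero_iff]
    exact (G p).le_of_opNorm_le_of_le (hm p hp) (by rw [← dist_eq_norm]; exact (mem_ball.1 hby).le)
  have hlim : Tendsto (fun r => m * r) (𝓝[>] hausdorffMNC B) (𝓝 (m * hausdorffMNC B)) :=
    ((continuous_const_mul m).tendsto _).mono_left nhdsWithin_le_nhds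
  exact ge_of_tendsto hlim (eventually_nhdsWithin_of_forall hcover)

end HausdorffMNC

section RealInequalities

lemma le_mul_exp_of_le_add_integral {n : ℝ → ℝ} {T ε c : ℝ} (hT : 0 ≤ T) (hc : 0 < c)
    (hn : ContinuousOn n (Icc 0 T)) (h : ∀ t ∈ Icc 0 T, n t ≤ ε + c * ∫ s in (0 : ℝ)..t, n s) :
    ∀ t ∈ Icc 0 T, n t ≤ ε * Real.exp (c * t) := by
  set m : ℝ → ℝ := fun s => n (projIcc 0 T hT s)
  have hm : Continuous m :=
    hn.comp_continuous (continuous_subtype_val.comp continuous_projIcc) fun s =>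
      (projIcc 0 T hT s).2
  have hmn : ∀ t ∈ Icc 0 T, ∫ s in (0 : ℝ)..t, m s = ∫ s in (0 : ℝ)..t, n s := by
    refine fun t ht => intervalIntegral.integral_congr fun s hs => ?_
    rw [uIcc_of_le ht.1] at hs
    simp only [m, projIcc_of_mem hT ⟨hs.1, hs.2.trans ht.2⟩]
  set G : ℝ → ℝ := fun t => ∫ s in (0 : ℝ)..t, m s
  have hG : ∀ t, HasDerivAt G (m t) t := fun t => (hm.integral_hasStrictDerivAt 0 t).hasDerivAt
  have hGn : ∀ t ∈ Icc 0 T, n t ≤ ε + c * G t := fun t ht => by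
    simpa only [G, hmn t ht] using h t ht
  have hGbound : ∀ t ∈ Icc 0 T, G t ≤ gronwallBound 0 c ε (t - 0) := by
    refine le_gronwallBound_of_liminf_deriv_right_le
      (fun t _ => (hG t).continuousAt.continuousWithinAt)
      (fun t _ r hr => (hG t).hasDerivWithinAt.liminf_right_slope_le hr) (by simp [G])
      fun t ht => ?_
    have := hGn t (Ico_subset_Icc_self ht)
    simp only [m, projIcc_of_mem hT (Ico_subset_Icc_self ht)]
    linarith
  intro t ht
  calc n t ≤ ε + c * G t := hGn t ht
  _ ≤ ε + c * gronwallBound 0 c ε (t - 0) := by gcongr; exact hGbound t ht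
  _ = ε * Real.exp (c * t) := by
      simp only [gronwallBound_of_K_ne_0 hc.ne', sub_zero, zero_mul, zero_add]
      field_simp; ring

lemma le_pow_mul_add_mul_geom_sum {x : ℕ → ℝ} {q d : ℝ} {n : ℕ} (hq : 0 ≤ q)
    (hstep : ∀ j < n, x (j + 1) ≤ q * x j + d) :
    x n ≤ q ^ n * x 0 + d * ∑ j ∈ Finset.range n, q ^ j := by
  induction n with
  | zero => simp
  | succ n ih =>
    calc x (n + 1) ≤ q * x n + d := hstep n n.lt_succ_self
    _ ≤ q * (q ^ n * x 0 + d * ∑ j ∈ Finset.range n, q ^ j) + d := by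
        gcongr; exact ih fun j hj => hstep j (hj.trans n.lt_succ_self)
    _ = q ^ (n + 1) * x 0 + d * ∑ j ∈ Finset.range (n + 1), q ^ j := by
        rw [geom_sum_succ]; ring

lemma exp_neg_mul_add_mul_le_exp_mul {a b h : ℝ} (hb : 0 ≤ b) (hh : 0 ≤ h) :
    Real.exp (-b * h) + a * h ≤ Real.exp (a * h) := by
  have : Real.exp (-b * h) ≤ 1 := Real.exp_le_one_iff.2 (by nlinarith)
  linarith [Real.add_one_le_exp (a * h)]

lemma exp_neg_mul_add_mul_le (a b h : ℝ) :
    Real.exp (-b * h) + a * h ≤ Real.exp (a * h * Real.exp (b * h) - b * h) := by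
  have hsplit : Real.exp (-b * h) + a * h = Real.exp (-b * h) * (a * h * Real.exp (b * h) + 1) := by
    rw [mul_add, mul_one, mul_left_comm, ← Real.exp_add]; simp; ring
  rw [hsplit, sub_eq_neg_add, Real.exp_add, neg_mul]
  gcongr
  exact Real.add_one_le_exp _

/-- `n` applications of `hstep` with steps of length `t / n`. -/
lemma le_of_step_le_of_nat {φ : ℝ → ℝ} {a b K t : ℝ} (ha : 0 ≤ a) (hb : 0 ≤ b) (hK : 0 ≤ K)
    (ht : 0 < t) (hφ0 : 0 ≤ φ 0)
    (hstep : ∀ τ τ', 0 ≤ τ → τ < τ' → τ' ≤ t →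
      φ τ' ≤ (Real.exp (-b * (τ' - τ)) + a * (τ' - τ)) * φ τ + K * (τ' - τ) ^ 2)
    {n : ℕ} (hn : 0 < n) :
    φ t ≤ Real.exp (a * t * Real.exp (b * (t / n)) - b * t) * φ 0
      + K * t * (t / n) * Real.exp (a * t) := by
  set h := t / n
  have hh : 0 < h := by positivity
  have hnh : n * h = t := by simp only [h]; field_simp
  set q := Real.exp (-b * h) + a * h
  have hq : 0 ≤ q := by positivity
  have hiter := le_pow_mul_add_mul_geom_sum (x := fun j => φ (j * h)) (d := K * h ^ 2) (n := n) hq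
    fun j hj => by
      have hj' : ((j : ℝ) + 1) * h ≤ n * h := by gcongr; exact_mod_cast hj
      have := hstep (j * h) ((j + 1) * h) (by positivity) (by nlinarith) (by linarith)
      rw [show ((j : ℝ) + 1) * h - j * h = h by ring] at this
      simpa only [Nat.cast_succ] using this
  have hpow : q ^ n ≤ Real.exp (a * t * Real.exp (b * h) - b * t) := by
    calc q ^ n ≤ Real.exp (a * h * Real.exp (b * h) - b * h) ^ n := by
          gcongr; exact exp_neg_mul_add_mul_le a b h
    _ = _ := by rw [← Real.exp_nat_mul, ← hnh]; ring_nf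
  have hsum : ∑ j ∈ Finset.range n, q ^ j ≤ n * Real.exp (a * t) := by
    have hq' : q ≤ Real.exp (a * h) := exp_neg_mul_add_mul_le_exp_mul hb hh.le
    calc ∑ j ∈ Finset.range n, q ^ j ≤ ∑ j ∈ Finset.range n, Real.exp (a * t) := by
          refine Finset.sum_le_sum fun j hj => ?_
          calc q ^ j ≤ Real.exp (a * h) ^ j := by gcongr
          _ = Real.exp (a * (j * h)) := by rw [← Real.exp_nat_mul]; ring_nf
          _ ≤ Real.exp (a * t) := by
              gcongr; rw [← hnh]; gcongr; exact_mod_cast (Finset.mem_range.1 hj).le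
    _ = n * Real.exp (a * t) := by simp
  calc φ t = φ (n * h) := by rw [hnh]
  _ ≤ q ^ n * φ 0 + K * h ^ 2 * ∑ j ∈ Finset.range n, q ^ j := by simpa using hiter
  _ ≤ Real.exp (a * t * Real.exp (b * h) - b * t) * φ 0 + K * h ^ 2 * (n * Real.exp (a * t)) := by
      gcongr
  _ = _ := by rw [← hnh]; ring

lemma le_exp_mul_of_step_le {φ : ℝ → ℝ} {a b K t : ℝ} (ha : 0 ≤ a) (hb : 0 ≤ b) (hK : 0 ≤ K)
    (ht : 0 ≤ t) (hφ0 : 0 ≤ φ 0)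
    (hstep : ∀ τ τ', 0 ≤ τ → τ < τ' → τ' ≤ t →
      φ τ' ≤ (Real.exp (-b * (τ' - τ)) + a * (τ' - τ)) * φ τ + K * (τ' - τ) ^ 2) :
    φ t ≤ Real.exp ((a - b) * t) * φ 0 := by
  rcases ht.eq_or_lt with rfl | ht
  · simp
  set g : ℝ → ℝ := fun h => Real.exp (a * t * Real.exp (b * h) - b * t) * φ 0
    + K * t * h * Real.exp (a * t)
  have hg : Tendsto (fun n : ℕ => g (t / n)) atTop (𝓝 (g 0)) :=
    ((by fun_prop : Continuous g).tendsto 0).comp (tendsto_const_div_atTop_nhds_zero_nat t)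
  have hg0 : g 0 = Real.exp ((a - b) * t) * φ 0 := by
    simp only [g, mul_zero, Real.exp_zero, mul_one]; ring_nf
  rw [← hg0]
  exact ge_of_tendsto hg (eventually_atTop.2 ⟨1, fun n hn =>
    le_of_step_le_of_nat ha hb hK ht hφ0 hstep hn⟩)

end RealInequalities

section EvolutionSystem

lemma isCompact_evolDomain (T : ℝ) : IsCompact (evolDomain T) := by
  refine (isCompact_Icc.prod isCompact_Icc : IsCompact (Icc (0 : ℝ) T ×ˢ Icc (0 : ℝ) T))
    |>.of_isClosed_subset ?_ ?_
  · exact (isClosed_le continuous_const continuous_snd).inter <|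
      (isClosed_le continuous_snd continuous_fst).inter (isClosed_le continuous_fst continuous_const)
  · rintro ⟨t, s⟩ ⟨h0s, hst, htT⟩
    exact ⟨⟨h0s.trans hst, htT⟩, h0s, hst.trans htT⟩

lemma Icc_prod_singleton_prod_Icc_subset {T τ τ' : ℝ} (hτ : 0 ≤ τ) (hτ' : τ' ≤ T) :
    Icc (0 : ℝ) 1 ×ˢ {τ'} ×ˢ Icc τ τ' ⊆ Icc 0 1 ×ˢ evolDomain T := by
  rintro ⟨lam, t, s⟩ ⟨hlam, rfl, hs⟩
  exact ⟨hlam, hτ.trans hs.1, hs.2, hτ'⟩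

variable {T : ℝ} {R : ℝ → ℝ → ℝ → E →L[ℝ] E}

lemma IsContinuousEvolFamily.tendsto_apply
    (hES : ∀ lam ∈ Icc (0 : ℝ) 1, IsEvolutionSystem T (R lam)) (hcont : IsContinuousEvolFamily T R)
    (x : E) {q : ℕ → ℝ × ℝ × ℝ} {q₀ : ℝ × ℝ × ℝ} (hq : ∀ n, q n ∈ Icc 0 1 ×ˢ evolDomain T)
    (hq₀ : q₀ ∈ Icc 0 1 ×ˢ evolDomain T) (hlim : Tendsto q atTop (𝓝 q₀)) :
    Tendsto (fun n => R (q n).1 (q n).2.1 (q n).2.2 x) atTop (𝓝 (R q₀.1 q₀.2.1 q₀.2.2 x)) :=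
  (hcont x _ _ (fun n => (hq n).1) hq₀.1 ((continuous_fst.tendsto _).comp hlim)).tendsto_comp
    ((hES q₀.1 hq₀.1).strong_cont x _ hq₀.2)
    (tendsto_nhdsWithin_iff.2 ⟨(continuous_snd.tendsto _).comp hlim,
      Eventually.of_forall fun n => (hq n).2⟩)

lemma IsContinuousEvolFamily.isCompact_orbit
    (hES : ∀ lam ∈ Icc (0 : ℝ) 1, IsEvolutionSystem T (R lam)) (hcont : IsContinuousEvolFamily T R)
    (x : E) :
    IsCompact ((fun q : ℝ × ℝ × ℝ => R q.1 q.2.1 q.2.2 x) '' (Icc 0 1 ×ˢ evolDomain T)) := by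
  refine IsSeqCompact.isCompact fun w hw => ?_
  choose q hq hqw using hw
  obtain ⟨q₀, hq₀, φ, hφ, hlim⟩ := (isCompact_Icc.prod (isCompact_evolDomain T)).tendsto_subseq hq
  refine ⟨_, mem_image_of_mem _ hq₀, φ, hφ, ?_⟩
  simpa only [Function.comp_def, ← hqw] using
    hcont.tendsto_apply hES x (fun n => hq (φ n)) hq₀ hlim

end EvolutionSystem

def evolImage (R : ℝ → ℝ → ℝ → E →L[ℝ] E) (P : Set (ℝ × ℝ × ℝ)) (B : Set E) : Set E :=
  image2 (fun q b => R q.1 q.2.1 q.2.2 b) P B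

lemma mem_evolImage {R : ℝ → ℝ → ℝ → E →L[ℝ] E} {P : Set (ℝ × ℝ × ℝ)} {B : Set E} {lam t s : ℝ}
    {b : E} (hq : (lam, t, s) ∈ P) (hb : b ∈ B) : R lam t s b ∈ evolImage R P B :=
  mem_image2_of_mem hq hb

structure IsExpStableEvolFamily (T ω : ℝ) (R : ℝ → ℝ → ℝ → E →L[ℝ] E) : Prop where
  isEvolutionSystem : ∀ lam ∈ Icc (0 : ℝ) 1, IsEvolutionSystem T (R lam)
  isContinuous : IsContinuousEvolFamily T R
  nonneg : 0 ≤ ω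
  norm_le : ∀ lam ∈ Icc (0 : ℝ) 1, ∀ s t : ℝ, 0 ≤ s → s ≤ t → t ≤ T →
    ‖R lam t s‖ ≤ Real.exp (-ω * (t - s))

namespace IsExpStableEvolFamily

variable {T ω : ℝ} {R : ℝ → ℝ → ℝ → E →L[ℝ] E}

lemma norm_le_one (hR : IsExpStableEvolFamily T ω R) {lam s t : ℝ} (hlam : lam ∈ Icc (0 : ℝ) 1)
    (hs : 0 ≤ s) (hst : s ≤ t) (ht : t ≤ T) : ‖R lam t s‖ ≤ 1 :=
  (hR.norm_le lam hlam s t hs hst ht).trans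
    (Real.exp_le_one_iff.2 (by nlinarith [hR.nonneg]))

lemma norm_le_one_of_mem (hR : IsExpStableEvolFamily T ω R) {q : ℝ × ℝ × ℝ}
    (hq : q ∈ Icc 0 1 ×ˢ evolDomain T) : ‖R q.1 q.2.1 q.2.2‖ ≤ 1 :=
  hR.norm_le_one hq.1 hq.2.1 hq.2.2.1 hq.2.2.2

lemma evolImage_subset_closedBall (hR : IsExpStableEvolFamily T ω R) {P : Set (ℝ × ℝ × ℝ)}
    (hP : P ⊆ Icc 0 1 ×ˢ evolDomain T) {B : Set E} {ρ : ℝ} (hB : B ⊆ closedBall 0 ρ) :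
    evolImage R P B ⊆ closedBall 0 ρ := by
  simpa only [evolImage, one_mul] using
    image2_apply_subset_closedBall (m := 1) (fun q hq => hR.norm_le_one_of_mem (hP hq)) hB

lemma hausdorffMNC_evolImage_le (hR : IsExpStableEvolFamily T ω R) {P : Set (ℝ × ℝ × ℝ)}
    (hP : P ⊆ Icc 0 1 ×ˢ evolDomain T) {m : ℝ} (hm0 : 0 ≤ m)
    (hm : ∀ q ∈ P, ‖R q.1 q.2.1 q.2.2‖ ≤ m) {B : Set E} (hB : IsBounded B) :
    hausdorffMNC (evolImage R P B) ≤ m * hausdorffMNC B :=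
  hausdorffMNC_image2_apply_le hm0 hm (fun y => ((hR.isContinuous.isCompact_orbit
    hR.isEvolutionSystem y).totallyBounded.subset (image_mono hP))) hB

lemma hausdorffMNC_evolImage_singleton_le (hR : IsExpStableEvolFamily T ω R) {s t : ℝ}
    (hs : 0 ≤ s) (hst : s ≤ t) (ht : t ≤ T) {B : Set E} (hB : IsBounded B) :
    hausdorffMNC (evolImage R (Icc 0 1 ×ˢ {t} ×ˢ {s}) B) ≤
      Real.exp (-ω * (t - s)) * hausdorffMNC B := by
  refine hR.hausdorffMNC_evolImage_le ?_ (Real.exp_pos _).le ?_ hB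
  · rintro ⟨lam, t', s'⟩ ⟨hlam, rfl, rfl⟩
    exact ⟨hlam, hs, hst, ht⟩
  · rintro ⟨lam, t', s'⟩ ⟨hlam, rfl, rfl⟩
    exact hR.norm_le lam hlam s' t' hs hst ht

end IsExpStableEvolFamily

lemma intervalIntegral_mem_smul_closure_convexHull [CompleteSpace E] {f : ℝ → E} {a b : ℝ}
    (hab : a < b) (hf : IntegrableOn f (Ioc a b)) {D : Set E} (hfD : ∀ s ∈ Ioc a b, f s ∈ D) :
    ∫ s in a..b, f s ∈ (b - a) • closure (convexHull ℝ D) := by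
  have hvol : volume (Ioc a b) ≠ 0 := by simp [hab]
  have havg : ⨍ s in Ioc a b, f s ∈ closure (convexHull ℝ D) :=
    (convex_convexHull ℝ D).closure.set_average_mem isClosed_closure hvol (by simp)
      (ae_restrict_of_forall_mem measurableSet_Ioc fun s hs =>
        subset_closure (subset_convexHull ℝ D (hfD s hs))) hf
  have heq : ∫ s in a..b, f s = (b - a) • ⨍ s in Ioc a b, f s := by
    rw [intervalIntegral.integral_of_le hab.le, setAverage_eq, smul_smul,
      Real.volume_real_Ioc_of_le hab.le, mul_inv_cancel₀ (sub_ne_zero.2 hab.ne'), one_smul]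
  exact heq ▸ smul_mem_smul_set havg

section MildSolution

variable {T : ℝ} {R : ℝ → ℝ → E →L[ℝ] E}

lemma IsEvolutionSystem.continuousOn_apply_comp (hR : IsEvolutionSystem T R) {t m : ℝ}
    (ht : t ≤ T) (hm : ∀ s ∈ Icc 0 t, ‖R t s‖ ≤ m) {w : ℝ → E} (hw : ContinuousOn w (Icc 0 t)) :
    ContinuousOn (fun s => R t s (w s)) (Icc 0 t) := by
  intro s₀ hs₀
  have hmaps : MapsTo (fun s : ℝ => (t, s)) (Icc 0 t) (evolDomain T) :=
    fun s hs => ⟨hs.1, hs.2, ht⟩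
  have hfixed : Tendsto (fun s => R t s (w s₀)) (𝓝[Icc 0 t] s₀) (𝓝 (R t s₀ (w s₀))) :=
    (hR.strong_cont (w s₀) _ (hmaps hs₀)).comp
      (continuous_const.prodMk continuous_id).continuousWithinAt hmaps
  have hdiff : Tendsto (fun s => R t s (w s - w s₀)) (𝓝[Icc 0 t] s₀) (𝓝 0) := by
    refine squeeze_zero_norm' ?_ (by simpa using ((hw s₀ hs₀).sub_const (w s₀)).norm.const_mul m)
    filter_upwards [self_mem_nhdsWithin] with s hs
    exact (R t s).le_of_opNorm_le (hm s hs) _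
  have hsum := hfixed.add hdiff
  simp only [map_sub, add_sub_cancel, add_zero] at hsum
  exact hsum

variable {g : ℝ → E → E} {x : E} {u : ℝ → E}

lemma IsMildSolution.norm_le (hT : 0 ≤ T)
    (hR1 : ∀ s t, 0 ≤ s → s ≤ t → t ≤ T → ‖R t s‖ ≤ 1) (hu : IsMildSolution T R g x u)
    {c : ℝ} (hc : 0 < c) (hgc : ∀ s ∈ Icc 0 T, ‖g s (u s)‖ ≤ c * (1 + ‖u s‖)) :
    ∀ t ∈ Icc 0 T, ‖u t‖ ≤ (‖x‖ + c * T) * Real.exp (c * T) := by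
  have hun : ContinuousOn (fun s => ‖u s‖) (Icc 0 T) := hu.1.norm
  have hintegral : ∀ t ∈ Icc 0 T, ‖u t‖ ≤ (‖x‖ + c * T) + c * ∫ s in (0 : ℝ)..t, ‖u s‖ := by
    intro t ht
    have hint : IntervalIntegrable (fun s => ‖u s‖) volume 0 t :=
      (hun.mono (by rw [uIcc_of_le ht.1]; exact Icc_subset_Icc_right ht.2)).intervalIntegrable
    have hI : ‖∫ s in (0 : ℝ)..t, R t s (g s (u s))‖ ≤ ∫ s in (0 : ℝ)..t, c * (1 + ‖u s‖) :=
      intervalIntegral.norm_integral_le_of_norm_le ht.1 (Eventually.of_forall fun s hs =>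
        ((R t s).le_of_opNorm_le (hR1 s t hs.1.le hs.2 ht.2) _).trans
          (by simpa using hgc s ⟨hs.1.le, hs.2.trans ht.2⟩))
        ((intervalIntegrable_const.add hint).const_mul c)
    rw [intervalIntegral.integral_const_mul, intervalIntegral.integral_add intervalIntegrable_const
      hint, intervalIntegral.integral_const, smul_eq_mul, mul_one, sub_zero] at hI
    have hx : ‖R t 0 x‖ ≤ ‖x‖ := by
      simpa using (R t 0).le_of_opNorm_le (hR1 0 t le_rfl ht.1 ht.2) x
    calc ‖u t‖ ≤ ‖R t 0 x‖ + ‖∫ s in (0 : ℝ)..t, R t s (g s (u s))‖ := by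
          rw [hu.2 t ht]; exact norm_add_le _ _
    _ ≤ ‖x‖ + c * (t + ∫ s in (0 : ℝ)..t, ‖u s‖) := add_le_add hx hI
    _ ≤ _ := by nlinarith [ht.2]
  intro t ht
  calc ‖u t‖ ≤ (‖x‖ + c * T) * Real.exp (c * t) :=
        le_mul_exp_of_le_add_integral hT hc hun hintegral t ht
  _ ≤ (‖x‖ + c * T) * Real.exp (c * T) := by gcongr; exact ht.2

variable [CompleteSpace E]

lemma IsMildSolution.eq_evol_add_integral (hR : IsEvolutionSystem T R) {m : ℝ}
    (hm : ∀ s t, 0 ≤ s → s ≤ t → t ≤ T → ‖R t s‖ ≤ m) (hu : IsMildSolution T R g x u)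
    (hg : ContinuousOn (fun s => g s (u s)) (Icc 0 T)) {τ σ : ℝ} (hτ : 0 ≤ τ) (hτσ : τ ≤ σ)
    (hσ : σ ≤ T) : u σ = R σ τ (u τ) + ∫ s in τ..σ, R σ s (g s (u s)) := by
  have hcont : ∀ t ∈ Icc τ T, ContinuousOn (fun s => R t s (g s (u s))) (Icc 0 t) := fun t ht =>
    hR.continuousOn_apply_comp ht.2 (fun s hs => hm s t hs.1 hs.2 ht.2)
      (hg.mono (Icc_subset_Icc_right ht.2))
  have hint : ∀ t ∈ Icc τ T, IntervalIntegrable (fun s => R t s (g s (u s))) volume 0 τ :=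
    fun t ht => ((hcont t ht).mono (Icc_subset_Icc_right ht.1)).intervalIntegrable_of_Icc hτ
  have hint' : IntervalIntegrable (fun s => R σ s (g s (u s))) volume τ σ :=
    ((hcont σ ⟨hτσ, hσ⟩).mono (Icc_subset_Icc_left hτ)).intervalIntegrable_of_Icc hτσ
  have hcomp : ∫ s in (0 : ℝ)..τ, R σ s (g s (u s)) =
      R σ τ (∫ s in (0 : ℝ)..τ, R τ s (g s (u s))) := by
    rw [← (R σ τ).intervalIntegral_comp_comm (hint τ ⟨le_rfl, hτσ.trans hσ⟩)]
    refine intervalIntegral.integral_congr fun s hs => ?_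
    rw [uIcc_of_le hτ] at hs
    simp [hR.comp hs.1 hs.2 hτσ hσ]
  rw [hu.2 σ ⟨hτ.trans hτσ, hσ⟩, hu.2 τ ⟨hτ, hτσ.trans hσ⟩, map_add,
    ← intervalIntegral.integral_add_adjacent_intervals (hint σ ⟨hτσ, hσ⟩) hint', hcomp,
    hR.comp le_rfl hτ hτσ hσ, ContinuousLinearMap.comp_apply, add_assoc]

end MildSolution

/-- The set `Φ_t(Q × [0,1])` of the paper. -/
def solutionValues (T : ℝ) (R : ℝ → ℝ → ℝ → E →L[ℝ] E) (F : ℝ → E → ℝ → E) (Q : Set E) (t : ℝ) :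
    Set E :=
  {y : E | ∃ x ∈ Q, ∃ lam ∈ Icc (0 : ℝ) 1, ∃ u : ℝ → E,
    IsMildSolution T (R lam) (fun s z => F s z lam) x u ∧ y = u t}

lemma ParamContinuous.continuousOn_comp {T : ℝ} {F : ℝ → E → ℝ → E} (hF : ParamContinuous T F)
    {u : ℝ → E} (hu : ContinuousOn u (Icc 0 T)) {lam : ℝ} (hlam : lam ∈ Icc (0 : ℝ) 1) :
    ContinuousOn (fun s => F s (u s) lam) (Icc 0 T) :=
  hF.comp (continuousOn_id.prodMk (hu.prodMk continuousOn_const)) fun _ hs =>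
    ⟨hs, mem_univ _, hlam⟩

lemma ParamSublinear.exists_norm_le {T : ℝ} {F : ℝ → E → ℝ → E} (hF : ParamSublinear T F)
    {M : ℝ} (hM : 0 ≤ M) : ∃ C ≥ 0, ∀ t ∈ Icc (0 : ℝ) T, ∀ lam ∈ Icc (0 : ℝ) 1,
      ∀ y ∈ closedBall (0 : E) M, ‖F t y lam‖ ≤ C := by
  obtain ⟨c, hc, hFc⟩ := hF
  refine ⟨c * (1 + M), by positivity, fun t ht lam hlam y hy => (hFc t ht lam hlam y).trans ?_⟩
  gcongr
  exact mem_closedBall_zero_iff.1 hy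

lemma paramImage_subset_closedBall {T M C : ℝ} {F : ℝ → E → ℝ → E}
    (hC : ∀ t ∈ Icc (0 : ℝ) T, ∀ lam ∈ Icc (0 : ℝ) 1, ∀ y ∈ closedBall (0 : E) M,
      ‖F t y lam‖ ≤ C)
    {U : Set E} (hU : U ⊆ closedBall 0 M) : paramImage T F U ⊆ closedBall 0 C := by
  rintro _ ⟨t, ht, y, hy, lam, hlam, rfl⟩
  exact mem_closedBall_zero_iff.2 (hC t ht lam hlam y (hU hy))

lemma solutionValues_zero_subset {T : ℝ} {R : ℝ → ℝ → ℝ → E →L[ℝ] E}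
    (hES : ∀ lam ∈ Icc (0 : ℝ) 1, IsEvolutionSystem T (R lam)) (hT : 0 ≤ T)
    (F : ℝ → E → ℝ → E) (Q : Set E) : solutionValues T R F Q 0 ⊆ Q := by
  rintro _ ⟨x, hx, lam, hlam, u, hu, rfl⟩
  rwa [hu.2 0 ⟨le_rfl, hT⟩, (hES lam hlam).refl 0 ⟨le_rfl, hT⟩, intervalIntegral.integral_same,
    add_zero, one_apply_eq_self]

namespace IsExpStableEvolFamily

variable {T ω : ℝ} {R : ℝ → ℝ → ℝ → E →L[ℝ] E} {F : ℝ → E → ℝ → E} {Q : Set E}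

lemma exists_solutionValues_subset_closedBall (hR : IsExpStableEvolFamily T ω R) (hT : 0 ≤ T)
    (hFsub : ParamSublinear T F) (hQ : IsBounded Q) :
    ∃ M ≥ 0, ∀ t ∈ Icc 0 T, solutionValues T R F Q t ⊆ closedBall 0 M := by
  obtain ⟨c, hc, hFc⟩ := hFsub
  obtain ⟨ρ, hρ⟩ := hQ.subset_closedBall (0 : E)
  refine ⟨(max ρ 0 + c * T) * Real.exp (c * T), by positivity, ?_⟩
  rintro t ht _ ⟨x, hx, lam, hlam, u, hu, rfl⟩
  have hxρ : ‖x‖ ≤ max ρ 0 := (mem_closedBall_zero_iff.1 (hρ hx)).trans (le_max_left ρ 0)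
  refine mem_closedBall_zero_iff.2 ((hu.norm_le hT (fun s t => hR.norm_le_one hlam) hc
    (fun s hs => hFc s hs lam hlam (u s)) t ht).trans ?_)
  gcongr

variable [CompleteSpace E] {M C τ τ' : ℝ}

lemma biUnion_solutionValues_subset_add_closedBall (hR : IsExpStableEvolFamily T ω R)
    (hF : ParamContinuous T F) (hM : ∀ t ∈ Icc 0 T, solutionValues T R F Q t ⊆ closedBall 0 M)
    (hC : ∀ t ∈ Icc (0 : ℝ) T, ∀ lam ∈ Icc (0 : ℝ) 1, ∀ y ∈ closedBall (0 : E) M,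
      ‖F t y lam‖ ≤ C)
    (hC0 : 0 ≤ C) (hτ : 0 ≤ τ) (hτ' : τ' ≤ T) :
    ⋃ σ ∈ Icc τ τ', solutionValues T R F Q σ ⊆
      evolImage R (Icc 0 1 ×ˢ Icc τ τ' ×ˢ {τ}) (solutionValues T R F Q τ)
        + closedBall 0 ((τ' - τ) * C) := by
  intro y hy
  obtain ⟨σ, hσ, x, hx, lam, hlam, u, hu, rfl⟩ := mem_iUnion₂.1 hy
  have hσT : σ ≤ T := hσ.2.trans hτ'
  rw [hu.eq_evol_add_integral (hR.isEvolutionSystem lam hlam) (fun s t => hR.norm_le_one hlam)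
    (hF.continuousOn_comp hu.1 hlam) hτ hσ.1 hσT]
  refine Set.add_mem_add (mem_evolImage ⟨hlam, hσ, rfl⟩ ⟨x, hx, lam, hlam, u, hu, rfl⟩) ?_
  have hbound : ∀ s ∈ uIoc τ σ, ‖R lam σ s (F s (u s) lam)‖ ≤ C := fun s hs => by
    rw [uIoc_of_le hσ.1] at hs
    have hs' : s ∈ Icc 0 T := ⟨hτ.trans hs.1.le, hs.2.trans hσT⟩
    exact ((R lam σ s).le_of_opNorm_le (hR.norm_le_one hlam hs'.1 hs.2 hσT) _).trans
      (by simpa using hC s hs' lam hlam (u s) (hM s hs' ⟨x, hx, lam, hlam, u, hu, rfl⟩))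
  rw [mem_closedBall_zero_iff]
  calc ‖∫ s in τ..σ, R lam σ s (F s (u s) lam)‖ ≤ C * |σ - τ| :=
        intervalIntegral.norm_integral_le_of_norm_le_const hbound
  _ ≤ (τ' - τ) * C := by
      rw [abs_of_nonneg (sub_nonneg.2 hσ.1), mul_comm]; gcongr; exact hσ.2

lemma solutionValues_subset_add_smul (hR : IsExpStableEvolFamily T ω R) (hF : ParamContinuous T F)
    (hτ : 0 ≤ τ) (hττ' : τ < τ') (hτ' : τ' ≤ T) :
    solutionValues T R F Q τ' ⊆
      evolImage R (Icc 0 1 ×ˢ {τ'} ×ˢ {τ}) (solutionValues T R F Q τ)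
        + (τ' - τ) • closure (convexHull ℝ (evolImage R (Icc 0 1 ×ˢ {τ'} ×ˢ Icc τ τ')
          (paramImage T F (⋃ σ ∈ Icc τ τ', solutionValues T R F Q σ)))) := by
  rintro _ ⟨x, hx, lam, hlam, u, hu, rfl⟩
  have hg := hF.continuousOn_comp hu.1 hlam
  rw [hu.eq_evol_add_integral (hR.isEvolutionSystem lam hlam) (fun s t => hR.norm_le_one hlam)
    hg hτ hττ'.le hτ']
  refine Set.add_mem_add (mem_evolImage ⟨hlam, rfl, rfl⟩ ⟨x, hx, lam, hlam, u, hu, rfl⟩)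
    (intervalIntegral_mem_smul_closure_convexHull hττ' ?_ fun s hs => ?_)
  · exact ((hR.isEvolutionSystem lam hlam).continuousOn_apply_comp hτ'
      (fun s hs => hR.norm_le_one hlam hs.1 hs.2 hτ') (hg.mono (Icc_subset_Icc_right hτ'))
      |>.integrableOn_Icc).mono_set (Ioc_subset_Icc_self.trans (Icc_subset_Icc_left hτ))
  · have hs' : s ∈ Icc τ τ' := ⟨hs.1.le, hs.2⟩
    exact mem_evolImage ⟨hlam, rfl, hs'⟩ ⟨s, ⟨hτ.trans hs'.1, hs'.2.trans hτ'⟩, u s,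
      mem_iUnion₂.2 ⟨s, hs', x, hx, lam, hlam, u, hu, rfl⟩, lam, hlam, rfl⟩

lemma hausdorffMNC_biUnion_solutionValues_le (hR : IsExpStableEvolFamily T ω R)
    (hF : ParamContinuous T F) (hM : ∀ t ∈ Icc 0 T, solutionValues T R F Q t ⊆ closedBall 0 M)
    (hC : ∀ t ∈ Icc (0 : ℝ) T, ∀ lam ∈ Icc (0 : ℝ) 1, ∀ y ∈ closedBall (0 : E) M,
      ‖F t y lam‖ ≤ C)
    (hC0 : 0 ≤ C) (hτ : 0 ≤ τ) (hττ' : τ ≤ τ') (hτ' : τ' ≤ T) :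
    hausdorffMNC (⋃ σ ∈ Icc τ τ', solutionValues T R F Q σ) ≤
      hausdorffMNC (solutionValues T R F Q τ) + (τ' - τ) * C := by
  have hP : Icc (0 : ℝ) 1 ×ˢ Icc τ τ' ×ˢ {τ} ⊆ Icc 0 1 ×ˢ evolDomain T := by
    rintro ⟨lam, σ, s⟩ ⟨hlam, hσ, rfl⟩
    exact ⟨hlam, hτ, hσ.1, hσ.2.trans hτ'⟩
  have hΦτ := hM τ ⟨hτ, hττ'.trans hτ'⟩
  calc _ ≤ hausdorffMNC (evolImage R (Icc 0 1 ×ˢ Icc τ τ' ×ˢ {τ}) (solutionValues T R F Q τ))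
        + hausdorffMNC (closedBall (0 : E) ((τ' - τ) * C)) :=
        hausdorffMNC_le_add_of_subset_add
          (isBounded_closedBall.subset (hR.evolImage_subset_closedBall hP hΦτ))
          isBounded_closedBall (biUnion_solutionValues_subset_add_closedBall hR hF hM hC hC0 hτ hτ')
  _ ≤ 1 * hausdorffMNC (solutionValues T R F Q τ) + (τ' - τ) * C := by
        gcongr
        · exact hR.hausdorffMNC_evolImage_le hP zero_le_one
            (fun q hq => hR.norm_le_one_of_mem (hP hq))
            (isBounded_closedBall.subset hΦτ)
        · exact hausdorffMNC_closedBall_le 0 (mul_nonneg (sub_nonneg.2 hττ') hC0)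
  _ = _ := by rw [one_mul]

lemma hausdorffMNC_evolImage_paramImage_le (hR : IsExpStableEvolFamily T ω R)
    (hF : ParamContinuous T F) {k : ℝ} (hk : 0 ≤ k)
    (hFk : ∀ Q : Set E, IsBounded Q → hausdorffMNC (paramImage T F Q) ≤ k * hausdorffMNC Q)
    (hM : ∀ t ∈ Icc 0 T, solutionValues T R F Q t ⊆ closedBall 0 M)
    (hC : ∀ t ∈ Icc (0 : ℝ) T, ∀ lam ∈ Icc (0 : ℝ) 1, ∀ y ∈ closedBall (0 : E) M,
      ‖F t y lam‖ ≤ C)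
    (hC0 : 0 ≤ C) (hτ : 0 ≤ τ) (hττ' : τ ≤ τ') (hτ' : τ' ≤ T) :
    hausdorffMNC (evolImage R (Icc 0 1 ×ˢ {τ'} ×ˢ Icc τ τ')
        (paramImage T F (⋃ σ ∈ Icc τ τ', solutionValues T R F Q σ))) ≤
      k * (hausdorffMNC (solutionValues T R F Q τ) + (τ' - τ) * C) := by
  have hU : ⋃ σ ∈ Icc τ τ', solutionValues T R F Q σ ⊆ closedBall 0 M :=
    iUnion₂_subset fun σ hσ => hM σ ⟨hτ.trans hσ.1, hσ.2.trans hτ'⟩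
  calc _ ≤ 1 * hausdorffMNC (paramImage T F (⋃ σ ∈ Icc τ τ', solutionValues T R F Q σ)) :=
        hR.hausdorffMNC_evolImage_le (Icc_prod_singleton_prod_Icc_subset hτ hτ') zero_le_one
          (fun q hq => hR.norm_le_one_of_mem (Icc_prod_singleton_prod_Icc_subset hτ hτ' hq))
          (isBounded_closedBall.subset (paramImage_subset_closedBall hC hU))
  _ ≤ k * hausdorffMNC (⋃ σ ∈ Icc τ τ', solutionValues T R F Q σ) := by
        rw [one_mul]; exact hFk _ (isBounded_closedBall.subset hU)
  _ ≤ _ := by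
        gcongr
        exact hausdorffMNC_biUnion_solutionValues_le hR hF hM hC hC0 hτ hττ' hτ'

lemma hausdorffMNC_solutionValues_le_step (hR : IsExpStableEvolFamily T ω R)
    (hF : ParamContinuous T F) {k : ℝ} (hk : 0 ≤ k)
    (hFk : ∀ Q : Set E, IsBounded Q → hausdorffMNC (paramImage T F Q) ≤ k * hausdorffMNC Q)
    (hM : ∀ t ∈ Icc 0 T, solutionValues T R F Q t ⊆ closedBall 0 M)
    (hC : ∀ t ∈ Icc (0 : ℝ) T, ∀ lam ∈ Icc (0 : ℝ) 1, ∀ y ∈ closedBall (0 : E) M,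
      ‖F t y lam‖ ≤ C)
    (hC0 : 0 ≤ C) (hτ : 0 ≤ τ) (hττ' : τ < τ') (hτ' : τ' ≤ T) :
    hausdorffMNC (solutionValues T R F Q τ') ≤
      (Real.exp (-ω * (τ' - τ)) + k * (τ' - τ)) * hausdorffMNC (solutionValues T R F Q τ)
        + k * C * (τ' - τ) ^ 2 := by
  set Φ := solutionValues T R F Q
  set D := evolImage R (Icc 0 1 ×ˢ {τ'} ×ˢ Icc τ τ') (paramImage T F (⋃ σ ∈ Icc τ τ', Φ σ))
  have hPW : Icc (0 : ℝ) 1 ×ˢ {τ'} ×ˢ {τ} ⊆ Icc 0 1 ×ˢ evolDomain T := by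
    rintro ⟨lam, t, s⟩ ⟨hlam, rfl, rfl⟩
    exact ⟨hlam, hτ, hττ'.le, hτ'⟩
  have hΦτ := hM τ ⟨hτ, hττ'.le.trans hτ'⟩
  have hU : ⋃ σ ∈ Icc τ τ', Φ σ ⊆ closedBall 0 M :=
    iUnion₂_subset fun σ hσ => hM σ ⟨hτ.trans hσ.1, hσ.2.trans hτ'⟩
  have hD : D ⊆ closedBall 0 C := hR.evolImage_subset_closedBall
    (Icc_prod_singleton_prod_Icc_subset hτ hτ') (paramImage_subset_closedBall hC hU)
  have hhullD : closure (convexHull ℝ D) ⊆ closedBall 0 C :=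
    closure_minimal (convexHull_min hD (convex_closedBall 0 C)) isClosed_closedBall
  have hβZ : hausdorffMNC ((τ' - τ) • closure (convexHull ℝ D)) ≤
      (τ' - τ) * (k * (hausdorffMNC (Φ τ) + (τ' - τ) * C)) := by
    refine (hausdorffMNC_smul_le (isBounded_closedBall.subset hhullD) (sub_pos.2 hττ')).trans ?_
    gcongr
    exact (hausdorffMNC_closure_convexHull_le (isBounded_closedBall.subset hD)).trans
      (hausdorffMNC_evolImage_paramImage_le hR hF hk hFk hM hC hC0 hτ hττ'.le hτ')
  calc hausdorffMNC (Φ τ') ≤ hausdorffMNC (evolImage R (Icc 0 1 ×ˢ {τ'} ×ˢ {τ}) (Φ τ))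
        + hausdorffMNC ((τ' - τ) • closure (convexHull ℝ D)) :=
        hausdorffMNC_le_add_of_subset_add
          (isBounded_closedBall.subset (hR.evolImage_subset_closedBall hPW hΦτ))
          ((isBounded_closedBall.subset hhullD).smul₀ _)
          (solutionValues_subset_add_smul hR hF hτ hττ' hτ')
  _ ≤ _ := add_le_add (hR.hausdorffMNC_evolImage_singleton_le hτ hττ'.le hτ'
        (isBounded_closedBall.subset hΦτ)) hβZ
  _ = _ := by ring

end IsExpStableEvolFamily

theorem statement_8_general
    {E : Type*} [NormedAddCommGroup E] [NormedSpace ℝ E] [CompleteSpace E]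
    (T : ℝ) (hT : 0 < T)
    (R : ℝ → ℝ → ℝ → E →L[ℝ] E)
    (hES : ∀ lam ∈ Icc (0 : ℝ) 1, IsEvolutionSystem T (R lam))
    (hcont : IsContinuousEvolFamily T R)
    (ω : ℝ) (hω : 0 < ω)
    (hbound : ∀ lam ∈ Icc (0 : ℝ) 1, ∀ s t : ℝ, 0 ≤ s → s ≤ t → t ≤ T →
      ‖R lam t s‖ ≤ Real.exp (-ω * (t - s)))
    (F : ℝ → E → ℝ → E)
    (hFc : ParamContinuous T F)
    (hFsub : ParamSublinear T F)
    (k : ℝ) (hk : 0 ≤ k)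
    (hFk : ∀ Q : Set E, Bornology.IsBounded Q →
      hausdorffMNC (paramImage T F Q) ≤ k * hausdorffMNC Q)
    (Q : Set E) (hQ : Bornology.IsBounded Q) (t : ℝ) (ht : t ∈ Icc (0 : ℝ) T) :
    Bornology.IsBounded {y : E | ∃ x ∈ Q, ∃ lam ∈ Icc (0 : ℝ) 1, ∃ u : ℝ → E,
        IsMildSolution T (R lam) (fun s z => F s z lam) x u ∧ y = u t} ∧
    hausdorffMNC {y : E | ∃ x ∈ Q, ∃ lam ∈ Icc (0 : ℝ) 1, ∃ u : ℝ → E,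
        IsMildSolution T (R lam) (fun s z => F s z lam) x u ∧ y = u t} ≤
      Real.exp ((k - ω) * t) * hausdorffMNC Q := by
  have hR : IsExpStableEvolFamily T ω R := ⟨hES, hcont, hω.le, hbound⟩
  obtain ⟨M, hM0, hM⟩ := hR.exists_solutionValues_subset_closedBall hT.le hFsub hQ
  obtain ⟨C, hC0, hC⟩ := hFsub.exists_norm_le hM0
  refine ⟨isBounded_closedBall.subset (hM t ht), ?_⟩
  calc hausdorffMNC (solutionValues T R F Q t)
      ≤ Real.exp ((k - ω) * t) * hausdorffMNC (solutionValues T R F Q 0) :=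
        le_exp_mul_of_step_le hk hR.nonneg (mul_nonneg hk hC0) ht.1 (hausdorffMNC_nonneg _)
          fun τ τ' hτ hττ' hτ' => hR.hausdorffMNC_solutionValues_le_step hFc hk hFk hM hC hC0
            hτ hττ' (hτ'.trans ht.2)
  _ ≤ Real.exp ((k - ω) * t) * hausdorffMNC Q := by
      gcongr
      exact hausdorffMNC_mono (solutionValues_zero_subset hES hT.le F Q) hQ

/-- Proposition 3(iii), Compactness: if moreover
`‖R^{(λ)}(t,s)‖ ≤ e^{−ω(t−s)}`, then for every bounded `Q ⊆ E` and `t ∈ [0,T]`, the set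
`Φ_t(Q × [0,1])` of values at time `t` of the mild solutions is bounded and satisfies
`β(Φ_t(Q × [0,1])) ≤ e^{(k−ω)t} β(Q)`. -/
theorem statement_8
    {E : Type*} [NormedAddCommGroup E] [NormedSpace ℝ E] [CompleteSpace E]
    [TopologicalSpace.SeparableSpace E]
    (T : ℝ) (hT : 0 < T)
    (R : ℝ → ℝ → ℝ → E →L[ℝ] E)
    (hES : ∀ lam ∈ Icc (0 : ℝ) 1, IsEvolutionSystem T (R lam))
    (hcont : IsContinuousEvolFamily T R)
    (ω : ℝ) (hω : 0 < ω)
    (hbound : ∀ lam ∈ Icc (0 : ℝ) 1, ∀ s t : ℝ, 0 ≤ s → s ≤ t → t ≤ T →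
      ‖R lam t s‖ ≤ Real.exp (-ω * (t - s)))
    (F : ℝ → E → ℝ → E)
    (hFc : ParamContinuous T F)
    (hFlip : ParamLocallyLipschitz T F)
    (hFsub : ParamSublinear T F)
    (k : ℝ) (hk : 0 ≤ k)
    (hFk : ∀ Q : Set E, Bornology.IsBounded Q →
      hausdorffMNC (paramImage T F Q) ≤ k * hausdorffMNC Q)
    (Q : Set E) (hQ : Bornology.IsBounded Q) (t : ℝ) (ht : t ∈ Icc (0 : ℝ) T) :
    Bornology.IsBounded {y : E | ∃ x ∈ Q, ∃ lam ∈ Icc (0 : ℝ) 1, ∃ u : ℝ → E,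
        IsMildSolution T (R lam) (fun s z => F s z lam) x u ∧ y = u t} ∧
    hausdorffMNC {y : E | ∃ x ∈ Q, ∃ lam ∈ Icc (0 : ℝ) 1, ∃ u : ℝ → E,
        IsMildSolution T (R lam) (fun s z => F s z lam) x u ∧ y = u t} ≤
      Real.exp ((k - ω) * t) * hausdorffMNC Q :=
  statement_8_general T hT R hES hcont ω hω hbound F hFc hFsub k hk hFk Q hQ t ht
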